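/- arXiv:1504.02667 — 3 statements merged into one kernel-verified Lean document; each statement's English description precedes it below -/
import Mathlib

section
/- For nonzero integers r₁, s₁, s₂, n₂, positive integers D, δ, and integers x, y, one has the identity (1/(Dδ)) · ∑_{n₁ mod D} ∑_{m₁ mod δ} S̃(n₁r₁, n₂s₂, m₁s₁; D, Dδ) e(−x n₁/D − y m₁/δ) = ∑_{C₁ mod D, (C₁,D)=1, r₁C₁ ≡ x (mod D)} ∑_{C₂ mod Dδ, (C₂,δ)=1, s₁·C̄₂ ≡ y (mod δ)} e(s₂ n₂ C̄₁ C₂ / D), where C̄₁ denotes the inverse of C₁ modulo D and C̄₂ the inverse of C₂ modulo δ. -/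
open scoped BigOperators

/-- e(x) = exp(2πix). -/
noncomputable def e (x : ℝ) : ℂ := Complex.exp (2 * Real.pi * Complex.I * x)

/-- The inverse of `a` modulo `n`, represented as an integer in `[0, n)`. -/
noncomputable def zinv (n : ℕ) (a : ℤ) : ℤ := (((a : ZMod n))⁻¹.val : ℤ)

/-- The GL(3) Kloosterman sum attached to the Weyl element w₄, for `D₁ ∣ D₂`:
`S̃(n₁,n₂,m₁;D₁,D₂) = ∑_{C₁ mod D₁, (C₁,D₁)=1} ∑_{C₂ mod D₂, (C₂,D₂/D₁)=1}
  e(n₂ C̄₁C₂/D₁ + m₁ C̄₂/(D₂/D₁) + n₁C₁/D₁)`. -/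
noncomputable def Stilde (n₁ n₂ m₁ : ℤ) (D₁ D₂ : ℕ) : ℂ :=
  ∑ c₁ ∈ Finset.range D₁, ∑ c₂ ∈ Finset.range D₂,
    if Nat.gcd c₁ D₁ = 1 ∧ Nat.gcd c₂ (D₂ / D₁) = 1 then
      e (((n₂ * zinv D₁ (c₁ : ℤ) * (c₂ : ℤ) : ℤ) : ℝ) / (D₁ : ℝ)
        + ((m₁ * zinv (D₂ / D₁) (c₂ : ℤ) : ℤ) : ℝ) / ((D₂ / D₁ : ℕ) : ℝ)
        + ((n₁ * (c₁ : ℤ) : ℤ) : ℝ) / (D₁ : ℝ))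
    else 0

/-! Expanding `S̃` and exchanging the order of summation, the sums over `n₁` and `m₁` become
complete additive character sums `∑_{n mod N} e(an/N)`, a geometric series of an `N`-th root of
unity, which equals `N` if `N ∣ a` and vanishes otherwise. They pick out exactly the congruences
`r₁C₁ ≡ x (mod D)` and `s₁C̄₂ ≡ y (mod δ)`, and the factor `Dδ` they produce cancels the
normalisation. -/

open Finset

lemma e_add (a b : ℝ) : e (a + b) = e a * e b := by
  simp only [e, ← Complex.exp_add]
  congr 1
  push_cast
  ring

lemma e_natCast_mul (n : ℕ) (x : ℝ) : e (n * x) = e x ^ n := by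
  rw [e, e, ← Complex.exp_nat_mul]
  congr 1
  push_cast
  ring

lemma e_eq_one_iff (x : ℝ) : e x = 1 ↔ ∃ k : ℤ, x = k := by
  have h2πI : 2 * (Real.pi : ℂ) * Complex.I ≠ 0 := by simp [Real.pi_ne_zero]
  rw [e, Complex.exp_eq_one_iff]
  refine exists_congr fun k => ⟨fun h => ?_, fun h => by rw [h]; push_cast; ring⟩
  exact_mod_cast mul_left_cancel₀ h2πI (h.trans (mul_comm _ _))

lemma e_intCast (k : ℤ) : e k = 1 :=
  (e_eq_one_iff _).2 ⟨k, rfl⟩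

lemma sum_range_e_mul_div (N : ℕ) (a : ℤ) :
    ∑ n ∈ range N, e (((a * (n : ℤ) : ℤ) : ℝ) / (N : ℝ)) =
      if (N : ℤ) ∣ a then (N : ℂ) else 0 := by
  rcases N.eq_zero_or_pos with rfl | hN
  · simp
  have hN0 : (N : ℝ) ≠ 0 := by positivity
  set ζ := e ((a : ℝ) / N) with hζ_def
  have hpow (n : ℕ) : e (((a * (n : ℤ) : ℤ) : ℝ) / (N : ℝ)) = ζ ^ n := by
    rw [← e_natCast_mul]
    congr 1
    push_cast
    ring
  simp only [hpow]
  split_ifs with hdvd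
  · obtain ⟨k, rfl⟩ := hdvd
    have hζ : ζ = 1 := by
      rw [hζ_def, ← e_intCast k]
      congr 1
      push_cast
      exact mul_div_cancel_left₀ _ hN0
    simp [hζ]
  · have hζ : ζ ≠ 1 := by
      rintro hζ
      obtain ⟨k, hk⟩ := (e_eq_one_iff _).1 hζ
      rw [div_eq_iff hN0] at hk
      exact hdvd ⟨k, by exact_mod_cast hk.trans (mul_comm _ _)⟩
    have hζN : ζ ^ N = 1 := by
      rw [← e_natCast_mul, mul_div_cancel₀ _ hN0, e_intCast]
    rw [geom_sum_eq hζ, hζN, sub_self, zero_div]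

lemma sum_sum_sum_sum_comm {ι ι' κ κ' M : Type*} [AddCommMonoid M] (A : Finset ι)
    (B : Finset ι') (C : Finset κ) (E : Finset κ') (f : ι → ι' → κ → κ' → M) :
    ∑ a ∈ A, ∑ b ∈ B, ∑ c ∈ C, ∑ d ∈ E, f a b c d
      = ∑ c ∈ C, ∑ d ∈ E, ∑ a ∈ A, ∑ b ∈ B, f a b c d := by
  simp only [← sum_product' A B, ← sum_product' C E]
  exact sum_comm

lemma sum_sum_Stilde_mul_e (r₁ s₁ s₂ n₂ x y : ℤ) {D : ℕ} (hD : 0 < D) (δ : ℕ) :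
    ∑ n₁ ∈ range D, ∑ m₁ ∈ range δ,
      Stilde ((n₁ : ℤ) * r₁) (n₂ * s₂) ((m₁ : ℤ) * s₁) D (D * δ) *
        e (-(((x * (n₁ : ℤ) : ℤ) : ℝ) / (D : ℝ)) - ((y * (m₁ : ℤ) : ℤ) : ℝ) / (δ : ℝ))
      = ∑ c₁ ∈ range D, ∑ c₂ ∈ range (D * δ),
        if Nat.gcd c₁ D = 1 ∧ Nat.gcd c₂ δ = 1 then
          (∑ n₁ ∈ range D, e ((((r₁ * c₁ - x) * (n₁ : ℤ) : ℤ) : ℝ) / D)) *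
            (∑ m₁ ∈ range δ, e ((((s₁ * zinv δ c₂ - y) * (m₁ : ℤ) : ℤ) : ℝ) / δ)) *
            e (((s₂ * n₂ * zinv D c₁ * c₂ : ℤ) : ℝ) / D)
        else 0 := by
  have hfactor (c₁ c₂ n₁ m₁ : ℕ) :
      e (((n₂ * s₂ * zinv D c₁ * c₂ : ℤ) : ℝ) / D + ((m₁ * s₁ * zinv δ c₂ : ℤ) : ℝ) / δ
          + ((n₁ * r₁ * c₁ : ℤ) : ℝ) / D) * e (-(((x * n₁ : ℤ) : ℝ) / D) - ((y * m₁ : ℤ) : ℝ) / δ)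
        = e ((((r₁ * c₁ - x) * n₁ : ℤ) : ℝ) / D) *
            e ((((s₁ * zinv δ c₂ - y) * m₁ : ℤ) : ℝ) / δ) *
            e (((s₂ * n₂ * zinv D c₁ * c₂ : ℤ) : ℝ) / D) := by
    rw [← e_add, ← e_add, ← e_add]
    congr 1
    push_cast
    ring
  simp only [Stilde, Nat.mul_div_cancel_left δ hD, sum_mul, ite_mul, zero_mul]
  rw [sum_sum_sum_sum_comm]
  refine sum_congr rfl fun c₁ _ => sum_congr rfl fun c₂ _ => ?_
  split_ifs
  · simp only [hfactor, mul_sum, sum_mul]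
  · simp

theorem w4_kloosterman_fourier_transform_general
    (r₁ s₁ s₂ n₂ : ℤ)
    (D δ : ℕ) (hD : 0 < D) (hδ : 0 < δ) (x y : ℤ) :
    (1 / ((D : ℂ) * (δ : ℂ))) *
        ∑ n₁ ∈ Finset.range D, ∑ m₁ ∈ Finset.range δ,
          Stilde ((n₁ : ℤ) * r₁) (n₂ * s₂) ((m₁ : ℤ) * s₁) D (D * δ) *
            e (-(((x * (n₁ : ℤ) : ℤ) : ℝ) / (D : ℝ)) - ((y * (m₁ : ℤ) : ℤ) : ℝ) / (δ : ℝ))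
      = ∑ c₁ ∈ Finset.range D, ∑ c₂ ∈ Finset.range (D * δ),
          if Nat.gcd c₁ D = 1 ∧ r₁ * (c₁ : ℤ) ≡ x [ZMOD (D : ℤ)] ∧
              Nat.gcd c₂ δ = 1 ∧ s₁ * zinv δ (c₂ : ℤ) ≡ y [ZMOD (δ : ℤ)] then
            e (((s₂ * n₂ * zinv D (c₁ : ℤ) * (c₂ : ℤ) : ℤ) : ℝ) / (D : ℝ))
          else 0 := by
  have hD0 : (D : ℂ) ≠ 0 := by exact_mod_cast hD.ne'
  have hδ0 : (δ : ℂ) ≠ 0 := by exact_mod_cast hδ.ne'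
  rw [sum_sum_Stilde_mul_e r₁ s₁ s₂ n₂ x y hD δ]
  simp only [sum_range_e_mul_div, mul_sum]
  refine sum_congr rfl fun c₁ _ => sum_congr rfl fun c₂ _ => ?_
  simp only [Int.modEq_iff_dvd, dvd_sub_comm (b := x), dvd_sub_comm (b := y)]
  split_ifs <;> first | (exfalso; tauto) | (simp; done) | field_simp

theorem w4_kloosterman_fourier_transform
    (r₁ s₁ s₂ n₂ : ℤ) (hr₁ : r₁ ≠ 0) (hs₁ : s₁ ≠ 0) (hs₂ : s₂ ≠ 0) (hn₂ : n₂ ≠ 0)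
    (D δ : ℕ) (hD : 0 < D) (hδ : 0 < δ) (x y : ℤ) :
    (1 / ((D : ℂ) * (δ : ℂ))) *
        ∑ n₁ ∈ Finset.range D, ∑ m₁ ∈ Finset.range δ,
          Stilde ((n₁ : ℤ) * r₁) (n₂ * s₂) ((m₁ : ℤ) * s₁) D (D * δ) *
            e (-(((x * (n₁ : ℤ) : ℤ) : ℝ) / (D : ℝ)) - ((y * (m₁ : ℤ) : ℤ) : ℝ) / (δ : ℝ))
      = ∑ c₁ ∈ Finset.range D, ∑ c₂ ∈ Finset.range (D * δ),
          if Nat.gcd c₁ D = 1 ∧ r₁ * (c₁ : ℤ) ≡ x [ZMOD (D : ℤ)] ∧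
              Nat.gcd c₂ δ = 1 ∧ s₁ * zinv δ (c₂ : ℤ) ≡ y [ZMOD (δ : ℤ)] then
            e (((s₂ * n₂ * zinv D (c₁ : ℤ) * (c₂ : ℤ) : ℤ) : ℝ) / (D : ℝ))
          else 0 :=
  w4_kloosterman_fourier_transform_general r₁ s₁ s₂ n₂ D δ hD hδ x y
end

section
/- Let s₁, s₂, α be complex numbers with Re(s₁ − α/2) > 0 and Re(s₂ + α/2) > 0. Then ∫₀^∞ (1+u²)^{−s₁} (1+u^{−2})^{−s₂} u^{α−1} du = (1/2) B(s₁ − α/2, s₂ + α/2), where B is the Euler Beta function. -/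
/-!
Since `1 + u⁻² = (1 + u²) / u²`, the integrand is `(u²)^s₂ (1 + u²)^(-(s₁ + s₂)) u^(α - 1)`,
so the integral is the Mellin transform at `α` of `x ↦ x^s₂ (1 + x)^(-(s₁ + s₂))` composed with
`u ↦ u²`; this halves the argument and contributes the factor `1/2`. What remains is
`∫₀^∞ t^(a - 1) (1 + t)^(-(a + b)) dt` with `a = s₂ + α/2`, `b = s₁ - α/2`, which the
substitution `x = t / (1 + t)` turns into the Euler integral `B(a, b)`.
-/

open Complex Set MeasureTheory

lemma ofReal_inv_cpow {c : ℝ} (hc : 0 ≤ c) (s : ℂ) : ((c⁻¹ : ℝ) : ℂ) ^ s = (c : ℂ) ^ (-s) := by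
  rw [ofReal_inv, inv_cpow_ofReal_nonneg hc, cpow_neg]

lemma hasDerivAt_div_one_add {t : ℝ} (ht : 1 + t ≠ 0) :
    HasDerivAt (fun t : ℝ => t / (1 + t)) ((1 + t) ^ 2)⁻¹ t := by
  refine ((hasDerivAt_id t).div ((hasDerivAt_id t).const_add 1) ht).congr_deriv ?_
  simp only [id]
  field_simp
  ring

lemma betaIntegral_integrand_comp_div_one_add {t : ℝ} (ht : 0 < t) (a b : ℂ) :
    |((1 + t) ^ 2)⁻¹| •
        (((t / (1 + t) : ℝ) : ℂ) ^ (a - 1) * (1 - ((t / (1 + t) : ℝ) : ℂ)) ^ (b - 1))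
      = (t : ℂ) ^ (a - 1) * (1 + (t : ℂ)) ^ (-(a + b)) := by
  have h1t : (0 : ℝ) < 1 + t := by linarith
  have h1t' : ((1 + t : ℝ) : ℂ) ≠ 0 := ofReal_ne_zero.2 h1t.ne'
  have hsub : 1 - ((t / (1 + t) : ℝ) : ℂ) = (((1 + t)⁻¹ : ℝ) : ℂ) := by
    push_cast at h1t' ⊢
    field_simp
    ring
  have hpow : ((1 + t : ℝ) : ℂ) ^ (-(a + b)) * ((1 + t : ℝ) : ℂ) ^ 2
      = ((1 + t : ℝ) : ℂ) ^ (-(a - 1)) * ((1 + t : ℝ) : ℂ) ^ (-(b - 1)) := by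
    rw [← cpow_ofNat, ← cpow_add _ _ h1t', ← cpow_add _ _ h1t']
    ring_nf
  rw [abs_of_pos (by positivity), real_smul, hsub, ofReal_inv_cpow h1t.le, div_eq_mul_inv,
    ofReal_mul, mul_cpow_ofReal_nonneg ht.le (by positivity), ofReal_inv_cpow h1t.le,
    show (1 : ℂ) + t = ((1 + t : ℝ) : ℂ) by push_cast; rfl, ofReal_inv, ofReal_pow, mul_assoc,
    ← hpow]
  field_simp

lemma image_div_one_add_Ioi : (fun t : ℝ => t / (1 + t)) '' Ioi 0 = Ioo 0 1 := by
  ext x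
  constructor
  · rintro ⟨t, ht : 0 < t, rfl⟩
    exact ⟨by positivity, (div_lt_one (by positivity)).2 (by linarith)⟩
  · rintro ⟨hx₀, hx₁⟩
    refine ⟨x / (1 - x), div_pos hx₀ (by linarith), ?_⟩
    have : 1 - x ≠ 0 := by linarith
    field_simp
    ring

lemma injOn_div_one_add_Ioi : InjOn (fun t : ℝ => t / (1 + t)) (Ioi 0) := by
  intro s (hs : 0 < s) t (ht : 0 < t) h
  field_simp at h
  linarith

lemma mellin_one_add_cpow_neg (a b : ℂ) :
    mellin (fun t : ℝ => (1 + (t : ℂ)) ^ (-(a + b))) a = betaIntegral a b := by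
  rw [betaIntegral, intervalIntegral.integral_of_le zero_le_one, integral_Ioc_eq_integral_Ioo,
    ← image_div_one_add_Ioi, integral_image_eq_integral_abs_deriv_smul measurableSet_Ioi
      (fun t (ht : 0 < t) => (hasDerivAt_div_one_add (by linarith)).hasDerivWithinAt)
      injOn_div_one_add_Ioi]
  refine setIntegral_congr_fun measurableSet_Ioi fun t ht => ?_
  rw [betaIntegral_integrand_comp_div_one_add ht, smul_eq_mul]

lemma one_add_cpow_neg_mul_one_add_inv_cpow_neg {x : ℝ} (hx : 0 < x) (s w : ℂ) :
    (1 + (x : ℂ)) ^ (-s) * (1 + (x : ℂ)⁻¹) ^ (-w) = (x : ℂ) ^ w * (1 + (x : ℂ)) ^ (-(s + w)) := by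
  have hx' : (x : ℂ) ≠ 0 := ofReal_ne_zero.2 hx.ne'
  have h1x : (1 + (x : ℂ)) = ((1 + x : ℝ) : ℂ) := by push_cast; rfl
  have h1x' : ((1 + x : ℝ) : ℂ) ≠ 0 := ofReal_ne_zero.2 (by positivity)
  have hinv : 1 + (x : ℂ)⁻¹ = ((1 + x : ℝ) : ℂ) / (x : ℂ) := by
    rw [← h1x]; field_simp; ring
  rw [hinv, div_cpow_ofReal_nonneg (by positivity) hx.le, h1x, neg_add, cpow_add _ _ h1x',
    cpow_neg _ w, cpow_neg x w]
  have : (x : ℂ) ^ w ≠ 0 := cpow_ne_zero_iff.2 (Or.inl hx')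
  field_simp

theorem mellin_beta_formula_1 (s₁ s₂ α : ℂ)
    (h₁ : 0 < (s₁ - α / 2).re) (h₂ : 0 < (s₂ + α / 2).re) :
    ∫ u in Set.Ioi (0 : ℝ),
        (1 + (u : ℂ) ^ 2) ^ (-s₁) * (1 + ((u : ℂ) ^ 2)⁻¹) ^ (-s₂) * (u : ℂ) ^ (α - 1)
      = (1 / 2) * (Complex.Gamma (s₁ - α / 2) * Complex.Gamma (s₂ + α / 2)
          / Complex.Gamma ((s₁ - α / 2) + (s₂ + α / 2))) := by
  set f : ℝ → ℂ := fun x => (x : ℂ) ^ s₂ • (1 + (x : ℂ)) ^ (-((s₂ + α / 2) + (s₁ - α / 2)))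
  have hsq : ∫ u in Ioi (0 : ℝ),
        (1 + (u : ℂ) ^ 2) ^ (-s₁) * (1 + ((u : ℂ) ^ 2)⁻¹) ^ (-s₂) * (u : ℂ) ^ (α - 1)
      = mellin (fun u => f (u ^ (2 : ℝ))) α := by
    refine setIntegral_congr_fun measurableSet_Ioi fun u (hu : 0 < u) => ?_
    have hsum : (s₂ + α / 2) + (s₁ - α / 2) = s₁ + s₂ := by ring
    simp only [f, Real.rpow_two, ofReal_pow, smul_eq_mul, hsum,
      ← one_add_cpow_neg_mul_one_add_inv_cpow_neg (pow_pos hu 2)]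
    ring
  have hshift : α / ((2 : ℝ) : ℂ) + s₂ = s₂ + α / 2 := by push_cast; ring
  rw [hsq, mellin_comp_rpow, mellin_cpow_smul, hshift, mellin_one_add_cpow_neg, abs_two,
    betaIntegral_symm, betaIntegral_eq_Gamma_mul_div _ _ h₁ h₂, real_smul]
  norm_num
end

section
/- Let s₁, s₂, α be complex numbers with Re(1 − s₁ − s₂) > 0 and Re(s₁ − α/2) > 0. Then ∫₁^∞ (u²−1)^{−s₁} (1−u^{−2})^{−s₂} u^{α−1} du = (1/2) B(1 − s₁ − s₂, s₁ − α/2). -/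
open Complex MeasureTheory Set

/-!
The substitution `t = u⁻²` maps `(1, ∞)` onto `(0, 1)` with `dt = 2 u⁻³ du`, and turns
`t ^ (s₁ - α/2 - 1) * (1 - t) ^ (-s₁ - s₂)` into twice the integrand, because
`u² - 1 = u² (1 - u⁻²)`. What remains is Euler's integral for `B(s₁ - α/2, 1 - s₁ - s₂)`.
-/

lemma image_inv_sq_Ioi_one : (fun u : ℝ => (u ^ 2)⁻¹) '' Ioi 1 = Ioo 0 1 := by
  ext t
  constructor
  · rintro ⟨u, hu : 1 < u, rfl⟩
    exact ⟨by positivity, inv_lt_one_of_one_lt₀ (one_lt_pow₀ hu two_ne_zero)⟩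
  · rintro ⟨ht₀, ht₁⟩
    refine ⟨√t⁻¹, Real.lt_sqrt zero_le_one |>.mpr (by simpa using (one_lt_inv₀ ht₀).mpr ht₁), ?_⟩
    simp [Real.sq_sqrt ht₀.le]

lemma injOn_inv_sq_Ioi_zero : InjOn (fun u : ℝ => (u ^ 2)⁻¹) (Ioi 0) := fun _ hx _ hy hxy =>
  (pow_left_inj₀ (le_of_lt hx) (le_of_lt hy) two_ne_zero).mp (inv_injective hxy)

lemma hasDerivAt_inv_sq {u : ℝ} (hu : u ≠ 0) :
    HasDerivAt (fun u : ℝ => (u ^ 2)⁻¹) (-2 / u ^ 3) u := by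
  refine ((hasDerivAt_pow 2 u).fun_inv (pow_ne_zero 2 hu)).congr_deriv ?_
  field_simp
  ring

-- No integrability assumption: if one side is not integrable, neither is the other.
lemma integral_Ioo_zero_one_eq_integral_Ioi_one {E : Type*} [NormedAddCommGroup E]
    [NormedSpace ℝ E] (f : ℝ → E) :
    ∫ t in Ioo 0 1, f t = ∫ u in Ioi 1, (2 / u ^ 3) • f (u ^ 2)⁻¹ := by
  have hpos : Ioi (1 : ℝ) ⊆ Ioi 0 := Ioi_subset_Ioi zero_le_one
  rw [← image_inv_sq_Ioi_one, integral_image_eq_integral_abs_deriv_smul measurableSet_Ioi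
    (fun u hu => (hasDerivAt_inv_sq (hpos hu).ne').hasDerivWithinAt)
    (injOn_inv_sq_Ioi_zero.mono hpos)]
  refine setIntegral_congr_fun measurableSet_Ioi fun u hu => ?_
  have hu₀ : 0 < u := hpos hu
  rw [abs_div, abs_neg, abs_of_pos (by positivity), abs_of_pos (by positivity)]

lemma ofReal_cpow_eq_exp {x : ℝ} (hx : 0 < x) (w : ℂ) : (x : ℂ) ^ w = exp (w * Real.log x) := by
  rw [cpow_def_of_ne_zero (ofReal_ne_zero.mpr hx.ne'), ofReal_log hx.le, mul_comm]

lemma smul_beta_integrand_inv_sq_eq (s₁ s₂ α : ℂ) {u : ℝ} (hu : 1 < u) :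
    (2 / u ^ 3 : ℝ) • ((((u ^ 2)⁻¹ : ℝ) : ℂ) ^ (s₁ - α / 2 - 1) *
        (1 - (((u ^ 2)⁻¹ : ℝ) : ℂ)) ^ (1 - s₁ - s₂ - 1)) =
    2 * (((u : ℂ) ^ 2 - 1) ^ (-s₁) * (1 - ((u : ℂ) ^ 2)⁻¹) ^ (-s₂) * (u : ℂ) ^ (α - 1)) := by
  -- every base is a positive real, so each power is `exp (w * Real.log x)`
  have hu₀ : 0 < u := zero_lt_one.trans hu
  have hv : 0 < 1 - (u ^ 2)⁻¹ := sub_pos.mpr (inv_lt_one_of_one_lt₀ (one_lt_pow₀ hu two_ne_zero))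
  have hlog : Real.log (u ^ 2 - 1) = 2 * Real.log u + Real.log (1 - (u ^ 2)⁻¹) := by
    rw [← Real.log_rpow hu₀, ← Real.log_mul (by positivity) hv.ne']
    congr 1; norm_cast; field_simp
  have h3 : ((2 / u ^ 3 : ℝ) : ℂ) = 2 * exp (-3 * Real.log u) := by
    rw [← ofReal_cpow_eq_exp hu₀, cpow_neg, cpow_ofNat]; push_cast; ring
  have hA : (u : ℂ) ^ 2 - 1 = ((u ^ 2 - 1 : ℝ) : ℂ) := by push_cast; rfl
  have hB : (1 : ℂ) - ((u : ℂ) ^ 2)⁻¹ = ((1 - (u ^ 2)⁻¹ : ℝ) : ℂ) := by push_cast; rfl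
  have hC : 1 - (((u ^ 2)⁻¹ : ℝ) : ℂ) = ((1 - (u ^ 2)⁻¹ : ℝ) : ℂ) := by push_cast; rfl
  rw [real_smul, h3, hA, hB, hC, ofReal_cpow_eq_exp (by positivity), ofReal_cpow_eq_exp hv,
    ofReal_cpow_eq_exp (by nlinarith), ofReal_cpow_eq_exp hv, ofReal_cpow_eq_exp hu₀,
    Real.log_inv, Real.log_pow, hlog]
  simp only [← exp_add, mul_assoc]
  congr 2
  push_cast
  ring

lemma betaIntegral_eq_integral_Ioo (a b : ℂ) :
    betaIntegral a b = ∫ t in Ioo (0 : ℝ) 1, (t : ℂ) ^ (a - 1) * (1 - (t : ℂ)) ^ (b - 1) := by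
  rw [betaIntegral, intervalIntegral.integral_of_le zero_le_one, integral_Ioc_eq_integral_Ioo]

theorem mellin_beta_formula_2 (s₁ s₂ α : ℂ)
    (h₁ : 0 < (1 - s₁ - s₂).re) (h₂ : 0 < (s₁ - α / 2).re) :
    ∫ u in Set.Ioi (1 : ℝ),
        ((u : ℂ) ^ 2 - 1) ^ (-s₁) * (1 - ((u : ℂ) ^ 2)⁻¹) ^ (-s₂) * (u : ℂ) ^ (α - 1)
      = (1 / 2) * (Complex.Gamma (1 - s₁ - s₂) * Complex.Gamma (s₁ - α / 2)
          / Complex.Gamma ((1 - s₁ - s₂) + (s₁ - α / 2))) := by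
  have hΓ : Gamma ((s₁ - α / 2) + (1 - s₁ - s₂)) ≠ 0 :=
    Gamma_ne_zero_of_re_pos (by rw [add_re]; positivity)
  rw [add_comm (1 - s₁ - s₂), mul_comm (Gamma _), Gamma_mul_Gamma_eq_betaIntegral h₂ h₁,
    mul_div_cancel_left₀ _ hΓ, betaIntegral_eq_integral_Ioo,
    integral_Ioo_zero_one_eq_integral_Ioi_one,
    setIntegral_congr_fun measurableSet_Ioi fun _ hu => smul_beta_integrand_inv_sq_eq s₁ s₂ α hu,
    integral_const_mul]
  ring
end
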